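/- Let H be a Hopf algebra whose group-like elements G(H) form an abelian group. For group-likes σ_1, σ_2, the cup product Ψ ⌣ Φ := Ψ ⊗ (σ_1 ▷ Φ) on cochains Ψ ∈ H^⊗p (for the coefficient σ_1) and Φ ∈ H^⊗q (for coefficient σ_2), where ▷ is the diagonal left multiplication action, satisfies the graded Leibniz rule d_{p+q}(Ψ⌣Φ) = d_p(Ψ)⌣Φ + (−1)^p Ψ⌣d_q(Φ) with respect to the coalgebra Hochschild differentials with group-like coefficients. -/

import Mathlib

open TensorProduct PiTensorProduct

/-!
In `Ψ ⌣ Φ = g ⧺ (σ₁ ▷ f)` the cofaces `d_0, …, d_p` only touch the block `g`, so they are the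
cofaces of `Ψ` followed by `σ₁ ▷ f`. For `i ≥ 1` the coface `d_{p+i}` acts on the block `σ₁ ▷ f`
as `σ₁ ▷ d_i(Φ)`, with sign `(-1)^p (-1)^i`: splitting a factor commutes with `σ₁ ▷ -` since `σ₁`
is group-like, and the last coface appends `σ₁ σ₂ = σ₁ ▷ σ₂`. The two leftover terms,
`d_{p+1}(Ψ) ⌣ Φ` (appending `σ₁` to `g`) and `(-1)^p Ψ ⌣ d_0(Φ)` (inserting `σ₁ * 1` in front of
`σ₁ ▷ f`), are the same tuple with opposite signs.
-/

variable {k H : Type*}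

/-- Insert the two legs `x ⊗ y` of a comultiplication at (0-based) position `p` of a tuple. -/
noncomputable def splitTup {H : Type*} {m : ℕ} (h : Fin m → H) (p : Fin m) (x y : H) :
    Fin (m + 1) → H :=
  Fin.insertNth p.succ y (Function.update h p x)

/-- Recast a tuple along an equality of lengths. -/
def recast {H : Type*} {a b : ℕ} (h : a = b) (t : Fin a → H) : Fin b → H :=
  fun j => t (Fin.cast h.symm j)

section Tuples

variable {α β : Type*} {m n : ℕ}

lemma recast_self (h : n = n) (t : Fin n → α) : recast h t = t := rfl

namespace Fin

lemma append_apply (s : Fin m → α) (t : Fin n → α) (j : Fin (m + n)) :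
    append s t j = if hj : j.val < m then s ⟨j, hj⟩ else t ⟨j - m, by omega⟩ := by
  induction j using addCases <;> simp

lemma map_cons (φ : α → β) (x : α) (t : Fin n → α) :
    (fun j => φ ((cons x t : Fin (n + 1) → α) j)) = cons (φ x) fun j => φ (t j) :=
  comp_cons φ x t

lemma map_snoc (φ : α → β) (t : Fin n → α) (x : α) :
    (fun j => φ ((snoc t x : Fin (n + 1) → α) j)) = snoc (fun j => φ (t j)) (φ x) :=
  comp_snoc φ t x

end Fin

lemma splitTup_apply (h : Fin m → α) (r : Fin m) (x y : α) (j : Fin (m + 1)) :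
    splitTup h r x y j =
      if hj : j.val < r then h ⟨j, by omega⟩ else if j.val = r then x
      else if j.val = r + 1 then y else h ⟨j - 1, by omega⟩ := by
  unfold splitTup
  rcases lt_trichotomy j r.succ with hc | rfl | hc
  · rw [Fin.insertNth_apply_below hc]
    simp only [eq_rec_constant, Function.update_apply, Fin.ext_iff, Fin.coe_castPred]
    rw [Fin.lt_def, Fin.val_succ] at hc
    split_ifs <;> first | rfl | omega
  · simp
  · rw [Fin.insertNth_apply_above hc]
    simp only [eq_rec_constant, Function.update_apply, Fin.ext_iff, Fin.val_pred]
    rw [Fin.lt_def, Fin.val_succ] at hc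
    split_ifs <;> first | rfl | omega

lemma map_splitTup (φ : α → β) (h : Fin m → α) (r : Fin m) (x y : α) :
    (fun j => φ (splitTup h r x y j)) = splitTup (fun j => φ (h j)) r (φ x) (φ y) := by
  funext j
  simp only [splitTup_apply]
  split_ifs <;> rfl

lemma recast_append_cons (h : m + 1 + n = m + n + 1) (x : α) (s : Fin m → α) (t : Fin n → α) :
    recast h (Fin.append (Fin.cons x s) t) = Fin.cons x (Fin.append s t) := by
  rw [Fin.append_cons]; rfl

lemma recast_append_snoc (h : m + (n + 1) = m + n + 1) (s : Fin m → α) (t : Fin n → α) (x : α) :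
    recast h (Fin.append s (Fin.snoc t x)) = Fin.snoc (Fin.append s t) x := by
  rw [Fin.append_snoc]; rfl

lemma recast_append_snoc_left (h : m + 1 + n = m + n + 1) (s : Fin m → α) (x : α)
    (t : Fin n → α) :
    recast h (Fin.append (Fin.snoc s x) t) =
      recast (Nat.add_succ m n) (Fin.append s (Fin.cons x t)) := by
  rw [Fin.append_left_snoc]; rfl

lemma recast_append_splitTup_left (h : m + 1 + n = m + n + 1) (s : Fin m → α) (t : Fin n → α)
    (r : Fin m) (x y : α) :
    recast h (Fin.append (splitTup s r x y) t) =
      splitTup (Fin.append s t) (Fin.castAdd n r) x y := by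
  funext j
  simp only [recast, splitTup_apply, Fin.append_apply, Fin.val_cast, Fin.val_castAdd]
  split_ifs <;> first | rfl | omega | exact congrArg _ (Fin.ext (by simp; omega))

lemma recast_append_splitTup_right (h : m + (n + 1) = m + n + 1) (s : Fin m → α) (t : Fin n → α)
    (r : Fin n) (x y : α) :
    recast h (Fin.append s (splitTup t r x y)) =
      splitTup (Fin.append s t) (Fin.natAdd m r) x y := by
  funext j
  simp only [recast, splitTup_apply, Fin.append_apply, Fin.val_cast, Fin.val_natAdd]
  split_ifs <;> first | rfl | omega | exact congrArg _ (Fin.ext (by simp; omega))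

end Tuples

lemma sum_neg_one_pow_add_smul {M : Type*} [AddCommGroup M] (p : ℕ) {q : ℕ} (S : Fin q → M) :
    ∑ r : Fin q, (-1 : ℤ) ^ (p + r + 1) • S r =
      (-1 : ℤ) ^ p • ∑ r : Fin q, (-1 : ℤ) ^ (r + 1 : ℕ) • S r := by
  simp only [Finset.smul_sum, smul_smul, ← pow_add, add_assoc]

theorem cup_leibniz
    [Field k] [Ring H] [Algebra k H]
    (σ₁ σ₂ : H)
    (ι : Type) (_ : Fintype ι)
    (p q : ℕ) (g : Fin p → H) (f : Fin q → H)
    -- Sweedler representations of the coproducts of the entries: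
    (Ug Wg : Fin p → ι → H)
    (Uf Wf : Fin q → ι → H) :
    -- `d(Ψ ⌣ Φ) = d(Ψ) ⌣ Φ + (−1)^p Ψ ⌣ d(Φ)` in `H^⊗(p+q+1)`, where
    -- `Ψ ⌣ Φ` is the tuple `A = g ⧺ (σ₁ ▷ f)`:
    ((tprod k (recast (by omega) (Fin.cons (1 : H) (Fin.append g fun j => σ₁ * f j)))
        : ⨂[k] _ : Fin (p + q + 1), H)
      + (∑ r : Fin (p + q), ((-1 : ℤ) ^ ((r : ℕ) + 1)) •
          ∑ j : ι, tprod k (splitTup (Fin.append g fun j' => σ₁ * f j') r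
            (Fin.append Ug (fun i j' => σ₁ * Uf i j') r j)
            (Fin.append Wg (fun i j' => σ₁ * Wf i j') r j)))
      + ((-1 : ℤ) ^ (p + q + 1)) •
          PiTensorProduct.tprod k (recast (by omega)
            (Fin.snoc (Fin.append g fun j => σ₁ * f j) (σ₁ * σ₂)))) =
    -- d(Ψ) ⌣ Φ :
    (((tprod k (recast (show p+1+q = p+q+1 by omega) (Fin.append (Fin.cons (1 : H) g) fun j => σ₁ * f j))
        : ⨂[k] _ : Fin (p + q + 1), H)
      + (∑ r : Fin p, ((-1 : ℤ) ^ ((r : ℕ) + 1)) •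
          ∑ j : ι, tprod k (recast (show p+1+q = p+q+1 by omega)
            (Fin.append (splitTup g r (Ug r j) (Wg r j)) fun j' => σ₁ * f j')))
      + ((-1 : ℤ) ^ (p + 1)) •
          tprod k (recast (show p+1+q = p+q+1 by omega) (Fin.append (Fin.snoc g σ₁) fun j => σ₁ * f j)))
    -- + (−1)^p Ψ ⌣ d(Φ) :
    + ((-1 : ℤ) ^ p) •
      (tprod k (recast (show p+(q+1) = p+q+1 by omega) (Fin.append g fun j : Fin (q+1) => σ₁ * (Fin.cons (1 : H) f : Fin (q+1) → H) j))
        + (∑ r : Fin q, ((-1 : ℤ) ^ ((r : ℕ) + 1)) •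
            ∑ j : ι, tprod k (recast (show p+(q+1) = p+q+1 by omega)
              (Fin.append g fun j' => σ₁ * splitTup f r (Uf r j) (Wf r j) j')))
        + ((-1 : ℤ) ^ (q + 1)) •
            tprod k (recast (show p+(q+1) = p+q+1 by omega)
              (Fin.append g fun j : Fin (q+1) => σ₁ * (Fin.snoc f σ₂ : Fin (q+1) → H) j)))) := by
  rw [Fin.sum_univ_add]
  simp only [Fin.val_castAdd, Fin.val_natAdd, Fin.append_left, Fin.append_right,
    Fin.map_cons (σ₁ * ·), Fin.map_snoc (σ₁ * ·), map_splitTup (σ₁ * ·), mul_one,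
    recast_append_cons, recast_append_snoc, recast_append_snoc_left,
    recast_append_splitTup_left, recast_append_splitTup_right, sum_neg_one_pow_add_smul]
  simp only [recast_self]
  module
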